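/- arXiv:2208.12123 — 3 statements merged into one kernel-verified Lean document; each statement's English description precedes it below -/
import Mathlib

section
/- Let {a(k)}, {b(k)}, {c(k)}, {d(k)} be nonnegative real sequences with Σ_{k=0}^{∞} b(k) < ∞ and Σ_{k=0}^{∞} c(k) < ∞, satisfying a(k+1) ≤ (1 + b(k)) a(k) − d(k) + c(k) for all k ≥ 0. Then a(k) converges to some limit a ≥ 0 and Σ_{k=0}^{∞} d(k) < ∞. -/
open Filter

theorem robbins_siegmund (a b c d : ℕ → ℝ)
    (ha : ∀ k, 0 ≤ a k) (hb : ∀ k, 0 ≤ b k) (hc : ∀ k, 0 ≤ c k) (hd : ∀ k, 0 ≤ d k)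
    (hbsum : Summable b) (hcsum : Summable c)
    (hrec : ∀ k, a (k + 1) ≤ (1 + b k) * a k - d k + c k) :
    (∃ aLim : ℝ, 0 ≤ aLim ∧ Tendsto a atTop (nhds aLim)) ∧ Summable d := by
  set P : ℕ → ℝ := fun k => ∏ j ∈ Finset.range k, (1 + b j) with hPdef
  have hP1 : ∀ k, (1:ℝ) ≤ P k := by
    intro k
    have h : ∏ j ∈ Finset.range k, (1:ℝ) ≤ ∏ j ∈ Finset.range k, (1 + b j) :=
      Finset.prod_le_prod (fun j _ => zero_le_one) (fun j _ => by linarith [hb j])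
    simpa using h
  have hPpos : ∀ k, (0:ℝ) < P k := fun k => lt_of_lt_of_le one_pos (hP1 k)
  have hPsucc : ∀ k, P (k+1) = P k * (1 + b k) := fun k => Finset.prod_range_succ _ k
  set B : ℝ := Real.exp (∑' j, b j) with hBdef
  have hPB : ∀ k, P k ≤ B := by
    intro k
    calc P k ≤ ∏ j ∈ Finset.range k, Real.exp (b j) := by
          apply Finset.prod_le_prod
          · intro j _; linarith [hb j]
          · intro j _; linarith [Real.add_one_le_exp (b j)]
      _ = Real.exp (∑ j ∈ Finset.range k, b j) := (Real.exp_sum _ _).symm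
      _ ≤ B := Real.exp_le_exp.mpr (Summable.sum_le_tsum _ (fun j _ => hb j) hbsum)
  set u : ℕ → ℝ := fun k => a k / P k with hudef
  set e : ℕ → ℝ := fun k => c k / P (k+1) with hedef
  set f : ℕ → ℝ := fun k => d k / P (k+1) with hfdef
  have hu0 : ∀ k, 0 ≤ u k := fun k => div_nonneg (ha k) (hPpos k).le
  have he0 : ∀ k, 0 ≤ e k := fun k => div_nonneg (hc k) (hPpos _).le
  have hf0 : ∀ k, 0 ≤ f k := fun k => div_nonneg (hd k) (hPpos _).le
  have key : ∀ k, u (k+1) + f k ≤ u k + e k := by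
    intro k
    have h1 : a (k+1) + d k ≤ (1 + b k) * a k + c k := by linarith [hrec k]
    have h2 : (a (k+1) + d k) / P (k+1) ≤ ((1 + b k) * a k + c k) / P (k+1) :=
      div_le_div_of_nonneg_right h1 (hPpos (k+1)).le
    have h3 : (1 + b k) * a k / P (k+1) = u k := by
      rw [hPsucc k]
      have hbk : (1 + b k) ≠ 0 := ne_of_gt (by linarith [hb k])
      rw [mul_comm (P k) (1 + b k), mul_div_mul_left _ _ hbk]
    calc u (k+1) + f k = (a (k+1) + d k) / P (k+1) := by rw [add_div]
      _ ≤ ((1 + b k) * a k + c k) / P (k+1) := h2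
      _ = u k + e k := by rw [add_div, h3]
  set S : ℕ → ℝ := fun k => ∑ j ∈ Finset.range k, e j with hSdef
  set T : ℕ → ℝ := fun k => ∑ j ∈ Finset.range k, f j with hTdef
  set w : ℕ → ℝ := fun k => u k + T k - S k with hwdef
  have hw_anti : Antitone w := by
    apply antitone_nat_of_succ_le
    intro k
    have hT : T (k+1) = T k + f k := Finset.sum_range_succ _ k
    have hS : S (k+1) = S k + e k := Finset.sum_range_succ _ k
    simp only [hwdef, hT, hS]
    linarith [key k]
  have hesum : Summable e :=
    Summable.of_nonneg_of_le he0 (fun k => div_le_self (hc k) (hP1 _)) hcsum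
  have hSle : ∀ k, S k ≤ ∑' j, e j := fun k => Summable.sum_le_tsum _ (fun j _ => he0 j) hesum
  have hT0 : ∀ k, 0 ≤ T k := fun k => Finset.sum_nonneg (fun j _ => hf0 j)
  have hTle : ∀ k, T k ≤ w 0 + ∑' j, e j := by
    intro k
    have := hw_anti (Nat.zero_le k)
    have := hu0 k
    have := hSle k
    simp only [hwdef] at *
    linarith
  have hfsum : Summable f := by
    apply summable_of_sum_range_le hf0
    intro n
    exact hTle n
  have hdsum : Summable d := by
    apply Summable.of_nonneg_of_le hd (fun k => ?_) (hfsum.mul_left B)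
    have : d k = f k * P (k+1) := (div_mul_cancel₀ (d k) (hPpos (k+1)).ne').symm
    calc d k = f k * P (k+1) := this
      _ ≤ f k * B := mul_le_mul_of_nonneg_left (hPB (k+1)) (hf0 k)
      _ = B * f k := mul_comm _ _
  refine ⟨?_, hdsum⟩
  -- w converges
  have hwbdd : BddBelow (Set.range w) := by
    refine ⟨-(∑' j, e j), ?_⟩
    rintro x ⟨k, rfl⟩
    have := hu0 k; have := hT0 k; have := hSle k
    simp only [hwdef]
    linarith
  have hwlim : Tendsto w atTop (nhds (⨅ k, w k)) := tendsto_atTop_ciInf hw_anti hwbdd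
  have hSlim : Tendsto S atTop (nhds (∑' j, e j)) := hesum.hasSum.tendsto_sum_nat
  have hTlim : Tendsto T atTop (nhds (∑' j, f j)) := hfsum.hasSum.tendsto_sum_nat
  have hulim : Tendsto u atTop (nhds ((⨅ k, w k) - (∑' j, f j) + (∑' j, e j))) := by
    have : u = fun k => w k - T k + S k := by
      funext k; simp only [hwdef]; ring
    rw [this]
    exact ((hwlim.sub hTlim).add hSlim)
  have hPmono : Monotone P := by
    apply monotone_nat_of_le_succ
    intro k
    rw [hPsucc k]
    nlinarith [hPpos k, hb k]
  have hPlim : Tendsto P atTop (nhds (⨆ k, P k)) :=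
    tendsto_atTop_ciSup hPmono ⟨B, by rintro x ⟨k, rfl⟩; exact hPB k⟩
  have halim : Tendsto a atTop
      (nhds (((⨅ k, w k) - (∑' j, f j) + (∑' j, e j)) * (⨆ k, P k))) := by
    have : a = fun k => u k * P k := by
      funext k
      simp only [hudef]
      rw [div_mul_cancel₀ (a k) (hPpos k).ne']
    rw [this]
    exact hulim.mul hPlim
  refine ⟨_, ?_, halim⟩
  have hL : 0 ≤ (⨅ k, w k) - (∑' j, f j) + (∑' j, e j) := ge_of_tendsto' hulim hu0
  have hQ : 0 ≤ (⨆ k, P k) := le_trans zero_le_one (ge_of_tendsto' hPlim hP1)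
  exact mul_nonneg hL hQ
end

section
/- Let Y ⊆ ℝⁿ be a closed convex set, g : ℝⁿ → ℝ a convex function, v ∈ ℝⁿ, and 0 < β₀ < 2. Suppose g⁺(v) = max{g(v),0} > 0 and d ∈ ∂g⁺(v) with d ≠ 0, and set x = P_Y( v − β₀ (g⁺(v)/‖d‖²) d ). Then for every z ∈ Y with g(z) ≤ 0, ‖x − z‖² ≤ ‖v − z‖² − β₀(2 − β₀) (g⁺(v))² / ‖d‖². -/
open scoped RealInnerProductSpace

set_option maxHeartbeats 1000000 in
theorem polyak_projected_subgradient_step (n : ℕ)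
    (Y : Set (EuclideanSpace ℝ (Fin n)))
    (hYne : Y.Nonempty) (hYclosed : IsClosed Y) (hYconv : Convex ℝ Y)
    (P : EuclideanSpace ℝ (Fin n) → EuclideanSpace ℝ (Fin n))
    (hP : ∀ u, P u ∈ Y ∧ ∀ w ∈ Y, ‖u - P u‖ ≤ ‖u - w‖)
    (g : EuclideanSpace ℝ (Fin n) → ℝ) (hg : ConvexOn ℝ Set.univ g)
    (v d : EuclideanSpace ℝ (Fin n)) (β₀ : ℝ)
    (hβ₀0 : 0 < β₀) (hβ₀2 : β₀ < 2)
    (hgv : 0 < max (g v) 0)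
    (hd : ∀ y, max (g y) 0 ≥ max (g v) 0 + ⟪d, y - v⟫)
    (hd0 : d ≠ 0)
    (x : EuclideanSpace ℝ (Fin n))
    (hx : x = P (v - (β₀ * (max (g v) 0 / ‖d‖ ^ 2)) • d)) :
    ∀ z ∈ Y, g z ≤ 0 →
      ‖x - z‖ ^ 2 ≤ ‖v - z‖ ^ 2 - β₀ * (2 - β₀) * (max (g v) 0) ^ 2 / ‖d‖ ^ 2 := by
  intro z hz hgz
  set G : ℝ := max (g v) 0 with hG
  set t : ℝ := β₀ * (G / ‖d‖ ^ 2) with ht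
  set u : EuclideanSpace ℝ (Fin n) := v - t • d with hu
  have hdn : (0:ℝ) < ‖d‖ := norm_pos_iff.mpr hd0
  have hdn2 : (0:ℝ) < ‖d‖ ^ 2 := by positivity
  have ht0 : 0 < t := by positivity
  have hxu : x = P u := hx
  have hproj : ∀ w ∈ Y, ⟪u - x, w - x⟫ ≤ 0 := by
    rw [hxu]
    haveI : Nonempty ↑Y := hYne.to_subtype
    have h1 : ‖u - P u‖ = ⨅ w : Y, ‖u - ↑w‖ := by
      apply le_antisymm
      · exact le_ciInf fun w => (hP u).2 w w.2
      · have hbdd : BddBelow (Set.range fun w : Y => ‖u - (w : EuclideanSpace ℝ (Fin n))‖) := by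
          refine ⟨0, ?_⟩
          rintro r ⟨w, rfl⟩
          exact norm_nonneg _
        exact ciInf_le hbdd ⟨P u, (hP u).1⟩
    exact (norm_eq_iInf_iff_real_inner_le_zero hYconv (hP u).1).mp h1
  -- ‖x - z‖² ≤ ‖u - z‖²
  have h2 : 0 ≤ ⟪u - x, x - z⟫ := by
    have := hproj z hz
    rw [show x - z = -(z - x) by abel, inner_neg_right]
    linarith
  have h3 : ‖u - z‖ ^ 2 = ‖u - x‖ ^ 2 + 2 * ⟪u - x, x - z⟫ + ‖x - z‖ ^ 2 := by
    rw [show u - z = (u - x) + (x - z) by abel]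
    exact norm_add_sq_real _ _
  have hxz : ‖x - z‖ ^ 2 ≤ ‖u - z‖ ^ 2 := by nlinarith [sq_nonneg ‖u - x‖]
  -- subgradient inequality at z
  have hdz : G ≤ ⟪d, v - z⟫ := by
    have h := hd z
    have hgz' : max (g z) 0 = 0 := max_eq_right hgz
    have hinner : ⟪d, v - z⟫ = -⟪d, z - v⟫ := by
      rw [show v - z = -(z - v) by abel, inner_neg_right]
    rw [hgz'] at h
    linarith
  -- expand ‖u - z‖²
  have hns : ‖t • d‖ ^ 2 = t ^ 2 * ‖d‖ ^ 2 := by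
    rw [norm_smul, mul_pow, Real.norm_eq_abs, sq_abs]
  have huz : ‖u - z‖ ^ 2 = ‖v - z‖ ^ 2 - 2 * (t * ⟪d, v - z⟫) + t ^ 2 * ‖d‖ ^ 2 := by
    rw [show u - z = (v - z) - t • d by rw [hu]; abel, norm_sub_sq_real,
      real_inner_smul_right, hns, real_inner_comm (v - z) d]
  have heq : 2 * (t * G) - t ^ 2 * ‖d‖ ^ 2 = β₀ * (2 - β₀) * G ^ 2 / ‖d‖ ^ 2 := by
    rw [ht]
    field_simp
  nlinarith [mul_le_mul_of_nonneg_left hdz (le_of_lt ht0)]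
end

section
/- Suppose for each t, y_i(t+1) = Σ_j B_{ij}(t) y_j(t) + ε_i(t), where B(t) are column stochastic matrices and ‖ε_i(t)‖ ≤ E(t) for all i. Suppose further there are constants C₂ > 0, 0 < λ₂ < 1 and a positive vector sequence μ(t) ∈ ℝᴺ with 1ᵀμ(t) = 1 such that |[B(t:s)]_{ij} − μⁱ(t)| ≤ C₂ λ₂^{t−s} for all t ≥ s ≥ 0, where B(t:s) = B(t)⋯B(s). Then with ỹ(t) = Σ_i y_i(t), for all i and t ≥ 1: ‖y_i(t) − μⁱ(t−1) ỹ(t)‖ ≤ C₂ λ₂^{t−1} Σ_j ‖y_j(0)‖ + N·max{C₂/λ₂, 1} Σ_{s=0}^{t−1} λ₂^{t−1−s} E(s). -/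
open Finset

/-- Backward product of matrices: `backProd B s k = B (s + k) * B (s + k - 1) * ⋯ * B s`,
so that `backProd B s (t - s)` represents `B(t : s) = B t ⋯ B s` for `t ≥ s`. -/
def backProd {N : ℕ} (B : ℕ → Matrix (Fin N) (Fin N) ℝ) (s : ℕ) :
    ℕ → Matrix (Fin N) (Fin N) ℝ
  | 0 => B s
  | k + 1 => B (s + k + 1) * backProd B s k

/-- `Pm B s k = B (s+k-1) * ⋯ * B s`, length `k` product, `Pm B s 0 = 1`. -/
def Pm {N : ℕ} (B : ℕ → Matrix (Fin N) (Fin N) ℝ) (s : ℕ) :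
    ℕ → Matrix (Fin N) (Fin N) ℝ
  | 0 => 1
  | k + 1 => B (s + k) * Pm B s k

lemma Pm_succ_eq_backProd {N : ℕ} (B : ℕ → Matrix (Fin N) (Fin N) ℝ) (s k : ℕ) :
    Pm B s (k + 1) = backProd B s k := by
  induction k with
  | zero => simp [Pm, backProd]
  | succ k ih =>
      show B (s + (k + 1)) * Pm B s (k + 1) = B (s + k + 1) * backProd B s k
      rw [ih]
      rfl

lemma Pm_colsum {N : ℕ} (B : ℕ → Matrix (Fin N) (Fin N) ℝ)
    (hBcol : ∀ t j, ∑ i, B t i j = 1) (s : ℕ) :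
    ∀ k j, ∑ i, Pm B s k i j = 1 := by
  intro k
  induction k with
  | zero => intro j; simp [Pm, Matrix.one_apply]
  | succ k ih =>
      intro j
      show ∑ i, (B (s + k) * Pm B s k) i j = 1
      simp only [Matrix.mul_apply]
      rw [Finset.sum_comm]
      simp_rw [← Finset.sum_mul, hBcol, one_mul]
      exact ih j

lemma closed_form {n N : ℕ} (B : ℕ → Matrix (Fin N) (Fin N) ℝ)
    (y : ℕ → Fin N → EuclideanSpace ℝ (Fin n))
    (ε : ℕ → Fin N → EuclideanSpace ℝ (Fin n))
    (hyrec : ∀ t i, y (t + 1) i = (∑ j, B t i j • y t j) + ε t i) :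
    ∀ t i, y t i = (∑ j, Pm B 0 t i j • y 0 j)
      + ∑ s ∈ Finset.range t, ∑ j, Pm B (s + 1) (t - s - 1) i j • ε s j := by
  intro t
  induction t with
  | zero => intro i; simp [Pm, Matrix.one_apply]
  | succ t ih =>
      intro i
      rw [hyrec t i]
      have hstep : ∀ j, y t j = (∑ k, Pm B 0 t j k • y 0 k)
          + ∑ s ∈ Finset.range t, ∑ k, Pm B (s + 1) (t - s - 1) j k • ε s k := ih
      simp_rw [hstep, smul_add, Finset.smul_sum, smul_smul, Finset.sum_add_distrib]
      rw [Finset.sum_range_succ]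
      have h0 : (∑ j, ∑ k, (B t i j * Pm B 0 t j k) • y 0 k)
          = ∑ k, Pm B 0 (t + 1) i k • y 0 k := by
        rw [Finset.sum_comm]
        refine Finset.sum_congr rfl fun k _ => ?_
        rw [← Finset.sum_smul]
        congr 1
        show ∑ j, B t i j * Pm B 0 t j k = (B (0 + t) * Pm B 0 t) i k
        simp [Matrix.mul_apply]
      have h1 : ∀ s, s ∈ Finset.range t →
          (∑ j, ∑ k, (B t i j * Pm B (s + 1) (t - s - 1) j k) • ε s k)
          = ∑ k, Pm B (s + 1) (t + 1 - s - 1) i k • ε s k := by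
        intro s hs
        rw [Finset.mem_range] at hs
        rw [Finset.sum_comm]
        refine Finset.sum_congr rfl fun k _ => ?_
        rw [← Finset.sum_smul]
        congr 1
        have ht : t + 1 - s - 1 = (t - s - 1) + 1 := by omega
        rw [ht]
        show ∑ j, B t i j * Pm B (s + 1) (t - s - 1) j k
            = (B (s + 1 + (t - s - 1)) * Pm B (s + 1) (t - s - 1)) i k
        have : s + 1 + (t - s - 1) = t := by omega
        rw [this]
        simp [Matrix.mul_apply]
      have h2 : (∑ k, Pm B (t + 1) (t + 1 - t - 1) i k • ε t k) = ε t i := by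
        have : t + 1 - t - 1 = 0 := by omega
        rw [this]
        simp [Pm, Matrix.one_apply]
      have h1' : (∑ j, ∑ s ∈ Finset.range t, ∑ k,
            (B t i j * Pm B (s + 1) (t - s - 1) j k) • ε s k)
          = ∑ s ∈ Finset.range t, ∑ k, Pm B (s + 1) (t + 1 - s - 1) i k • ε s k := by
        rw [Finset.sum_comm]
        exact Finset.sum_congr rfl h1
      rw [h0, h1', h2]
      abel

theorem perturbed_push_sum_tracking (n N : ℕ) (hN : 1 ≤ N)
    (B : ℕ → Matrix (Fin N) (Fin N) ℝ)
    (hBnonneg : ∀ t i j, 0 ≤ B t i j)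
    (hBcol : ∀ t j, ∑ i, B t i j = 1)
    (y : ℕ → Fin N → EuclideanSpace ℝ (Fin n))
    (ε : ℕ → Fin N → EuclideanSpace ℝ (Fin n))
    (E : ℕ → ℝ)
    (hε : ∀ t i, ‖ε t i‖ ≤ E t)
    (hyrec : ∀ t i, y (t + 1) i = (∑ j, B t i j • y t j) + ε t i)
    (C₂ lam₂ : ℝ) (hC₂ : 0 < C₂) (hlam₂0 : 0 < lam₂) (hlam₂1 : lam₂ < 1)
    (μ : ℕ → Fin N → ℝ)
    (hμpos : ∀ t i, 0 < μ t i)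
    (hμsum : ∀ t, ∑ i, μ t i = 1)
    (hergodic : ∀ s t : ℕ, s ≤ t → ∀ i j,
      |backProd B s (t - s) i j - μ t i| ≤ C₂ * lam₂ ^ (t - s)) :
    ∀ i, ∀ t : ℕ, 1 ≤ t →
      ‖y t i - μ (t - 1) i • (∑ j, y t j)‖ ≤
        C₂ * lam₂ ^ (t - 1) * (∑ j, ‖y 0 j‖)
          + N * max (C₂ / lam₂) 1 * ∑ s ∈ Finset.range t, lam₂ ^ (t - 1 - s) * E s := by
  intro i t ht
  obtain ⟨u, rfl⟩ : ∃ u, t = u + 1 := ⟨t - 1, by omega⟩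
  simp only [Nat.add_sub_cancel]
  have hμle : ∀ t i, μ t i ≤ 1 := by
    intro t i
    calc μ t i ≤ ∑ j, μ t j :=
      Finset.single_le_sum (fun j _ => (hμpos t j).le) (Finset.mem_univ i)
    _ = 1 := hμsum t
  have hEnn : ∀ s, 0 ≤ E s := fun s => le_trans (norm_nonneg _) (hε s i)
  have hcf := closed_form B y ε hyrec
  -- total sum
  have htot : (∑ j, y (u + 1) j) = (∑ j, y 0 j)
      + ∑ s ∈ Finset.range (u + 1), ∑ j, ε s j := by
    simp_rw [hcf (u + 1), Finset.sum_add_distrib]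
    congr 1
    · rw [Finset.sum_comm]
      refine Finset.sum_congr rfl fun j _ => ?_
      rw [← Finset.sum_smul, Pm_colsum B hBcol, one_smul]
    · rw [Finset.sum_comm]
      refine Finset.sum_congr rfl fun s _ => ?_
      rw [Finset.sum_comm]
      refine Finset.sum_congr rfl fun j _ => ?_
      rw [← Finset.sum_smul, Pm_colsum B hBcol, one_smul]
  -- difference formula
  have hdiff : y (u + 1) i - μ u i • (∑ j, y (u + 1) j)
      = (∑ j, (Pm B 0 (u + 1) i j - μ u i) • y 0 j)
        + ∑ s ∈ Finset.range (u + 1), ∑ j,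
            (Pm B (s + 1) (u + 1 - s - 1) i j - μ u i) • ε s j := by
    rw [htot, hcf (u + 1) i]
    simp only [smul_add, Finset.smul_sum, sub_smul, Finset.sum_sub_distrib]
    abel
  rw [hdiff]
  -- coefficient bounds
  have hA : ∀ j, |Pm B 0 (u + 1) i j - μ u i| ≤ C₂ * lam₂ ^ u := by
    intro j
    have := hergodic 0 u (Nat.zero_le u) i j
    rwa [Nat.sub_zero, ← Pm_succ_eq_backProd] at this
  have hB : ∀ s, s ∈ Finset.range (u + 1) → ∀ j,
      |Pm B (s + 1) (u + 1 - s - 1) i j - μ u i|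
        ≤ max (C₂ / lam₂) 1 * lam₂ ^ (u - s) := by
    intro s hs j
    rw [Finset.mem_range] at hs
    rcases eq_or_lt_of_le (Nat.lt_succ_iff.mp hs) with heq | hlt
    · -- s = u
      have h0 : u + 1 - s - 1 = 0 := by omega
      rw [h0]
      have h2 : |Pm B (s + 1) 0 i j - μ u i| ≤ lam₂ ^ (u - s) := by
        have hus : u - s = 0 := by omega
        rw [hus, pow_zero]
        show |(1 : Matrix (Fin N) (Fin N) ℝ) i j - μ u i| ≤ 1
        rw [Matrix.one_apply]
        rcases eq_or_ne i j with hij | hij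
        · rw [if_pos hij, abs_le]
          constructor <;> nlinarith [hμpos u i, hμle u i]
        · rw [if_neg hij, zero_sub, abs_neg, abs_of_pos (hμpos u i)]
          exact hμle u i
      calc |Pm B (s + 1) 0 i j - μ u i| ≤ lam₂ ^ (u - s) := h2
        _ = 1 * lam₂ ^ (u - s) := (one_mul _).symm
        _ ≤ max (C₂ / lam₂) 1 * lam₂ ^ (u - s) :=
            mul_le_mul_of_nonneg_right (le_max_right _ _) (pow_nonneg hlam₂0.le _)
    · -- s < u
      have h0 : u + 1 - s - 1 = (u - s - 1) + 1 := by omega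
      rw [h0, Pm_succ_eq_backProd]
      have h1 : u - s - 1 = u - (s + 1) := by omega
      rw [h1]
      have := hergodic (s + 1) u (by omega) i j
      refine le_trans this ?_
      have h2 : u - (s + 1) + 1 = u - s := by omega
      have h3 : lam₂ ^ (u - s) = lam₂ * lam₂ ^ (u - (s + 1)) := by
        rw [← h2, pow_succ]; ring
      rw [h3]
      have h4 : C₂ * lam₂ ^ (u - (s + 1)) = (C₂ / lam₂) * (lam₂ * lam₂ ^ (u - (s + 1))) := by
        field_simp
      rw [h4]
      have hpos : 0 ≤ lam₂ * lam₂ ^ (u - (s + 1)) :=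
        mul_nonneg hlam₂0.le (pow_nonneg hlam₂0.le _)
      exact mul_le_mul_of_nonneg_right (le_max_left _ _) hpos
  -- norm estimates
  have hmaxnn : (0 : ℝ) ≤ max (C₂ / lam₂) 1 := le_trans zero_le_one (le_max_right _ _)
  calc ‖(∑ j, (Pm B 0 (u + 1) i j - μ u i) • y 0 j)
        + ∑ s ∈ Finset.range (u + 1), ∑ j,
            (Pm B (s + 1) (u + 1 - s - 1) i j - μ u i) • ε s j‖
      ≤ ‖∑ j, (Pm B 0 (u + 1) i j - μ u i) • y 0 j‖
        + ‖∑ s ∈ Finset.range (u + 1), ∑ j,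
            (Pm B (s + 1) (u + 1 - s - 1) i j - μ u i) • ε s j‖ := norm_add_le _ _
    _ ≤ C₂ * lam₂ ^ u * (∑ j, ‖y 0 j‖)
        + N * max (C₂ / lam₂) 1 * ∑ s ∈ Finset.range (u + 1), lam₂ ^ (u - s) * E s := by
        gcongr ?_ + ?_
        · calc ‖∑ j, (Pm B 0 (u + 1) i j - μ u i) • y 0 j‖
              ≤ ∑ j, ‖(Pm B 0 (u + 1) i j - μ u i) • y 0 j‖ := norm_sum_le _ _
          _ ≤ ∑ j, C₂ * lam₂ ^ u * ‖y 0 j‖ := by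
              refine Finset.sum_le_sum fun j _ => ?_
              rw [norm_smul, Real.norm_eq_abs]
              exact mul_le_mul_of_nonneg_right (hA j) (norm_nonneg _)
          _ = C₂ * lam₂ ^ u * (∑ j, ‖y 0 j‖) := by rw [Finset.mul_sum]
        · calc ‖∑ s ∈ Finset.range (u + 1), ∑ j,
                  (Pm B (s + 1) (u + 1 - s - 1) i j - μ u i) • ε s j‖
              ≤ ∑ s ∈ Finset.range (u + 1), ‖∑ j,
                  (Pm B (s + 1) (u + 1 - s - 1) i j - μ u i) • ε s j‖ := norm_sum_le _ _
          _ ≤ ∑ s ∈ Finset.range (u + 1),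
                N * (max (C₂ / lam₂) 1 * (lam₂ ^ (u - s) * E s)) := by
              refine Finset.sum_le_sum fun s hs => ?_
              calc ‖∑ j, (Pm B (s + 1) (u + 1 - s - 1) i j - μ u i) • ε s j‖
                  ≤ ∑ j, ‖(Pm B (s + 1) (u + 1 - s - 1) i j - μ u i) • ε s j‖ :=
                    norm_sum_le _ _
                _ ≤ ∑ _j : Fin N, max (C₂ / lam₂) 1 * (lam₂ ^ (u - s) * E s) := by
                    refine Finset.sum_le_sum fun j _ => ?_
                    rw [norm_smul, Real.norm_eq_abs]
                    calc |Pm B (s + 1) (u + 1 - s - 1) i j - μ u i| * ‖ε s j‖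
                        ≤ (max (C₂ / lam₂) 1 * lam₂ ^ (u - s)) * E s := by
                          apply mul_le_mul (hB s hs j) (hε s j) (norm_nonneg _)
                          exact mul_nonneg hmaxnn (pow_nonneg hlam₂0.le _)
                      _ = max (C₂ / lam₂) 1 * (lam₂ ^ (u - s) * E s) := by ring
                _ = N * (max (C₂ / lam₂) 1 * (lam₂ ^ (u - s) * E s)) := by
                    rw [Finset.sum_const, Finset.card_univ, Fintype.card_fin, nsmul_eq_mul]
          _ = N * max (C₂ / lam₂) 1 * ∑ s ∈ Finset.range (u + 1), lam₂ ^ (u - s) * E s := by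
              rw [Finset.mul_sum]
              exact Finset.sum_congr rfl fun s _ => by ring
end
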